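/- arXiv:2111.02111 — 4 statements merged into one kernel-verified Lean document; each statement's English description precedes it below -/
import Mathlib

section
/- Let (x_1,y_1),...,(x_k,y_k) be points in the plane and p_1,...,p_k nonnegative reals summing to p > 0. Then there exist indices i, j (possibly equal) and a real number q with 0 ≤ q ≤ p such that q·x_i + (p−q)·x_j ≥ p_1·x_1 + ... + p_k·x_k and q·y_i + (p−q)·y_j ≥ p_1·y_1 + ... + p_k·y_k. -/
open Finset

private lemma find_dir (ux uy wx wy : ℝ) :
    ∃ α β : ℝ, ¬(α = 0 ∧ β = 0) ∧ 0 ≤ α * ux + β * wx ∧ 0 ≤ α * uy + β * wy := by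
  by_cases hdet : ux * wy - uy * wx = 0
  · by_cases hx : ux = 0 ∧ wx = 0
    · by_cases hy : uy = 0 ∧ wy = 0
      · exact ⟨1, 0, by simp, by rw [hx.1, hx.2]; norm_num, by rw [hy.1, hy.2]; norm_num⟩
      · refine ⟨wy, -uy, ?_, ?_, ?_⟩
        · rintro ⟨h1, h2⟩; exact hy ⟨by linarith [neg_eq_zero.mp h2], h1⟩
        · rw [hx.1, hx.2]; norm_num
        · nlinarith [sq_nonneg uy, sq_nonneg wy]
    · refine ⟨wx, -ux, ?_, ?_, ?_⟩
      · rintro ⟨h1, h2⟩; exact hx ⟨by linarith [neg_eq_zero.mp h2], h1⟩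
      · nlinarith
      · nlinarith
  · refine ⟨(wy - wx) / (ux * wy - uy * wx), (ux - uy) / (ux * wy - uy * wx), ?_, ?_, ?_⟩
    · rintro ⟨h1, h2⟩
      rw [div_eq_zero_iff] at h1 h2
      rcases h1 with h1 | h1
      · rcases h2 with h2 | h2
        · apply hdet; linear_combination wy*h2 + uy*h1
        · exact hdet h2
      · exact hdet h1
    · have : (wy - wx) / (ux * wy - uy * wx) * ux + (ux - uy) / (ux * wy - uy * wx) * wx = 1 := by
        rw [div_mul_eq_mul_div, div_mul_eq_mul_div, ← add_div, div_eq_one_iff_eq hdet]; ring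
      rw [this]; norm_num
    · have : (wy - wx) / (ux * wy - uy * wx) * uy + (ux - uy) / (ux * wy - uy * wx) * wy = 1 := by
        rw [div_mul_eq_mul_div, div_mul_eq_mul_div, ← add_div, div_eq_one_iff_eq hdet]; ring
      rw [this]; norm_num

private lemma base_case (k : ℕ) (x y p : Fin k → ℝ) (hp : ∀ i, 0 ≤ p i) (P : ℝ)
    (hP : ∑ i, p i = P) (hPpos : 0 < P)
    (h2 : (univ.filter (fun i => p i ≠ 0)).card ≤ 2) :
    ∃ a b : Fin k, ∃ q : ℝ, 0 ≤ q ∧ q ≤ P ∧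
      (∑ i, p i * x i) ≤ q * x a + (P - q) * x b ∧
      (∑ i, p i * y i) ≤ q * y a + (P - q) * y b := by
  set s := univ.filter (fun i => p i ≠ 0) with hs
  have hsum : ∀ f : Fin k → ℝ, ∑ i, p i * f i = ∑ i ∈ s, p i * f i := by
    intro f
    rw [hs, Finset.sum_filter_of_ne]
    intro i _ h
    intro hpi; apply h; rw [hpi]; ring
  have hsump : ∑ i ∈ s, p i = P := by
    rw [← hP, hs, Finset.sum_filter_of_ne]
    intro i _ h hpi; exact h hpi
  have hne : s.Nonempty := by
    by_contra h
    rw [Finset.not_nonempty_iff_eq_empty] at h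
    rw [h, Finset.sum_empty] at hsump
    linarith
  obtain ⟨a, ha⟩ := hne
  by_cases hb : ∃ b ∈ s, b ≠ a
  · obtain ⟨b, hbs, hba⟩ := hb
    have hseq : s = {a, b} := by
      apply (Finset.eq_of_subset_of_card_le _ _).symm
      · intro i hi
        simp only [Finset.mem_insert, Finset.mem_singleton] at hi
        rcases hi with h | h <;> subst h <;> assumption
      · rw [Finset.card_pair (Ne.symm hba)]; exact h2
    have hab : a ≠ b := Ne.symm hba
    refine ⟨a, b, p a, hp a, ?_, ?_, ?_⟩
    · have : p a + p b = P := by rw [← hsump, hseq, Finset.sum_pair hab]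
      have := hp b; linarith
    · rw [hsum x, hseq, Finset.sum_pair hab]
      have : p a + p b = P := by rw [← hsump, hseq, Finset.sum_pair hab]
      have : P - p a = p b := by linarith
      rw [this]
    · rw [hsum y, hseq, Finset.sum_pair hab]
      have : p a + p b = P := by rw [← hsump, hseq, Finset.sum_pair hab]
      have : P - p a = p b := by linarith
      rw [this]
  · push_neg at hb
    have hseq : s = {a} := by
      apply Finset.eq_singleton_iff_unique_mem.mpr
      exact ⟨ha, fun b hbs => hb b hbs⟩
    have hpa : p a = P := by rw [← hsump, hseq, Finset.sum_singleton]
    refine ⟨a, a, P, le_of_lt hPpos, le_refl P, ?_, ?_⟩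
    · rw [hsum x, hseq, Finset.sum_singleton, hpa]; ring_nf; rfl
    · rw [hsum y, hseq, Finset.sum_singleton, hpa]; ring_nf; rfl

private lemma aux : ∀ (n k : ℕ) (x y p : Fin k → ℝ), (∀ i, 0 ≤ p i) → ∀ P : ℝ,
    (∑ i, p i) = P → 0 < P → (univ.filter (fun i => p i ≠ 0)).card ≤ n →
    ∃ a b : Fin k, ∃ q : ℝ, 0 ≤ q ∧ q ≤ P ∧
      (∑ i, p i * x i) ≤ q * x a + (P - q) * x b ∧
      (∑ i, p i * y i) ≤ q * y a + (P - q) * y b := by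
  intro n
  induction n with
  | zero =>
    intro k x y p hp P hP hPpos hcard
    exact base_case k x y p hp P hP hPpos (le_trans hcard (by norm_num))
  | succ n ih =>
    intro k x y p hp P hP hPpos hcard
    by_cases h2 : (univ.filter (fun i => p i ≠ 0)).card ≤ 2
    · exact base_case k x y p hp P hP hPpos h2
    -- support has at least 3 elements
    push_neg at h2
    obtain ⟨i1, h1s, i2, h2s, i3, h3s, h12, h13, h23⟩ := Finset.two_lt_card.mp h2
    simp only [Finset.mem_filter] at h1s h2s h3s
    obtain ⟨α, β, hαβ, hEx, hEy⟩ :=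
      find_dir (x i1 - x i3) (y i1 - y i3) (x i2 - x i3) (y i2 - y i3)
    set d : Fin k → ℝ := fun i =>
      (if i = i1 then α else 0) + (if i = i2 then β else 0)
        - (if i = i3 then α + β else 0) with hd
    have sum_d : ∀ f : Fin k → ℝ,
        ∑ i, d i * f i = α * f i1 + β * f i2 - (α + β) * f i3 := by
      intro f
      simp only [hd, add_mul, sub_mul, ite_mul, zero_mul]
      rw [Finset.sum_sub_distrib, Finset.sum_add_distrib,
        Finset.sum_ite_eq' univ i1, Finset.sum_ite_eq' univ i2,
        Finset.sum_ite_eq' univ i3]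
      simp
    have sum_d0 : ∑ i, d i = 0 := by
      have := sum_d (fun _ => 1)
      simpa using this
    have hEx' : 0 ≤ ∑ i, d i * x i := by rw [sum_d]; nlinarith [hEx]
    have hEy' : 0 ≤ ∑ i, d i * y i := by rw [sum_d]; nlinarith [hEy]
    have hd_supp : ∀ i, d i ≠ 0 → p i ≠ 0 := by
      intro i hdi
      by_cases e1 : i = i1
      · subst e1; exact h1s.2
      by_cases e2 : i = i2
      · subst e2; exact h2s.2
      by_cases e3 : i = i3
      · subst e3; exact h3s.2
      simp [hd, e1, e2, e3] at hdi
    -- there's a negative component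
    have hneg : ∃ i, d i < 0 := by
      by_contra h
      push_neg at h
      have hall : ∀ i ∈ univ, d i = 0 :=
        (Finset.sum_eq_zero_iff_of_nonneg (fun i _ => h i)).mp sum_d0
      have hα : d i1 = α := by simp [hd, h12, h13]
      have hβ : d i2 = β := by simp [hd, h12.symm, h23]
      exact hαβ ⟨by rw [← hα, hall i1 (Finset.mem_univ i1)],
        by rw [← hβ, hall i2 (Finset.mem_univ i2)]⟩
    set T := univ.filter (fun i => d i < 0) with hT
    have hTne : T.Nonempty := by
      obtain ⟨i, hi⟩ := hneg
      exact ⟨i, by simp [hT, hi]⟩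
    set t := T.inf' hTne (fun i => p i / (-d i)) with ht
    have ht0 : 0 ≤ t := by
      apply Finset.le_inf'
      intro i hi
      simp only [hT, Finset.mem_filter] at hi
      exact div_nonneg (hp i) (by linarith [hi.2])
    obtain ⟨i0, hi0T, hi0⟩ := Finset.exists_mem_eq_inf' hTne (fun i => p i / (-d i))
    have hdi0 : d i0 < 0 := by
      simp only [hT, Finset.mem_filter] at hi0T; exact hi0T.2
    set p' : Fin k → ℝ := fun i => p i + t * d i with hp'def
    have hp' : ∀ i, 0 ≤ p' i := by
      intro i
      by_cases hdi : d i < 0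
      · have hle : t ≤ p i / (-d i) := by
          rw [ht]; exact Finset.inf'_le _ (by simp [hT, hdi])
        have hmul : t * (-d i) ≤ p i := (le_div_iff₀ (by linarith : (0:ℝ) < -d i)).mp hle
        simp only [hp'def]; nlinarith
      · push_neg at hdi
        simp only [hp'def]
        have := hp i
        nlinarith
    have hP' : ∑ i, p' i = P := by
      simp only [hp'def]
      rw [Finset.sum_add_distrib, hP, ← Finset.mul_sum, sum_d0]
      ring
    have hsumx : ∑ i, p i * x i ≤ ∑ i, p' i * x i := by
      simp only [hp'def, add_mul]
      rw [Finset.sum_add_distrib]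
      have : 0 ≤ ∑ i, t * d i * x i := by
        have : ∑ i, t * d i * x i = t * ∑ i, d i * x i := by
          rw [Finset.mul_sum]; congr 1; ext i; ring
        rw [this]; exact mul_nonneg ht0 hEx'
      linarith
    have hsumy : ∑ i, p i * y i ≤ ∑ i, p' i * y i := by
      simp only [hp'def, add_mul]
      rw [Finset.sum_add_distrib]
      have : 0 ≤ ∑ i, t * d i * y i := by
        have : ∑ i, t * d i * y i = t * ∑ i, d i * y i := by
          rw [Finset.mul_sum]; congr 1; ext i; ring
        rw [this]; exact mul_nonneg ht0 hEy'
      linarith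
    -- support strictly decreases
    have hsubset : univ.filter (fun i => p' i ≠ 0) ⊆ univ.filter (fun i => p i ≠ 0) := by
      intro i hi
      simp only [Finset.mem_filter] at hi ⊢
      refine ⟨Finset.mem_univ i, ?_⟩
      intro hpi
      by_cases hdi : d i = 0
      · apply hi.2; simp [hp'def, hpi, hdi]
      · exact hd_supp i hdi hpi
    have hi0mem : i0 ∈ univ.filter (fun i => p i ≠ 0) := by
      simp only [Finset.mem_filter]
      exact ⟨Finset.mem_univ i0, hd_supp i0 (ne_of_lt hdi0)⟩
    have hi0notmem : i0 ∉ univ.filter (fun i => p' i ≠ 0) := by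
      simp only [Finset.mem_filter, not_and, not_not]
      intro _
      have hne0 : d i0 ≠ 0 := ne_of_lt hdi0
      show p i0 + t * d i0 = 0
      rw [ht, hi0]
      field_simp
      ring
    have hcard' : (univ.filter (fun i => p' i ≠ 0)).card ≤ n := by
      have : (univ.filter (fun i => p' i ≠ 0)).card < (univ.filter (fun i => p i ≠ 0)).card :=
        Finset.card_lt_card (Finset.ssubset_iff_of_subset hsubset |>.mpr ⟨i0, hi0mem, hi0notmem⟩)
      omega
    obtain ⟨a, b, q, hq0, hqP, hx', hy'⟩ := ih k x y p' hp' P hP' hPpos hcard'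
    exact ⟨a, b, q, hq0, hqP, le_trans hsumx hx', le_trans hsumy hy'⟩

/-- Any convex combination (total weight `P > 0`) of finitely many points in the plane is
weakly dominated in both coordinates by a combination, with the same total weight,
supported on at most two of the points. -/
theorem stmt0 (k : ℕ) (x y p : Fin k → ℝ) (hp : ∀ i, 0 ≤ p i) (P : ℝ)
    (hP : ∑ i, p i = P) (hPpos : 0 < P) :
    ∃ a b : Fin k, ∃ q : ℝ, 0 ≤ q ∧ q ≤ P ∧
      (∑ i, p i * x i) ≤ q * x a + (P - q) * x b ∧
      (∑ i, p i * y i) ≤ q * y a + (P - q) * y b := by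
  exact aux (univ.filter (fun i => p i ≠ 0)).card k x y p hp P hP hPpos (le_refl _)
end

section
/- For any point A in the convex hull of a finite set S of points in ℝ², there exists a point B in the convex hull of S such that B has the same y-coordinate as A, B's x-coordinate is greater than or equal to A's x-coordinate, and B lies in the convex hull of at most two points of S. -/
lemma triCore (p q r A : ℝ × ℝ) (a b c : ℝ) (ha : 0 ≤ a) (hb : 0 ≤ b) (hc : 0 ≤ c)
    (habc : a + b + c = 1)
    (h1 : A.1 = a * p.1 + b * q.1 + c * r.1)
    (h2 : A.2 = a * p.2 + b * q.2 + c * r.2)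
    (hp : A.2 ≤ p.2) (hq : A.2 ≤ q.2) (hr : r.2 < A.2) :
    ∃ B : ℝ × ℝ, B.2 = A.2 ∧ A.1 ≤ B.1 ∧
      (B ∈ segment ℝ p r ∨ B ∈ segment ℝ q r) := by
  have hpr : 0 < p.2 - r.2 := by linarith
  have hqr : 0 < q.2 - r.2 := by linarith
  have hAr : 0 < A.2 - r.2 := by linarith
  set t1 : ℝ := (A.2 - r.2) / (p.2 - r.2) with ht1
  set t2 : ℝ := (A.2 - r.2) / (q.2 - r.2) with ht2
  have ht1pos : 0 < t1 := div_pos hAr hpr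
  have ht1le : t1 ≤ 1 := by rw [ht1, div_le_one hpr]; linarith
  have ht2pos : 0 < t2 := div_pos hAr hqr
  have ht2le : t2 ≤ 1 := by rw [ht2, div_le_one hqr]; linarith
  set s : ℝ := a / t1 with hs
  have hs0 : 0 ≤ s := div_nonneg ha ht1pos.le
  have hst1 : s * t1 = a := div_mul_cancel₀ a (ne_of_gt ht1pos)
  have key : a * (p.2 - r.2) + b * (q.2 - r.2) = A.2 - r.2 := by
    linear_combination -h2 - r.2 * habc
  have hsum : s + b / t2 = 1 := by
    rw [hs, ht1, ht2, div_div_eq_mul_div, div_div_eq_mul_div, ← add_div,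
      div_eq_one_iff_eq (ne_of_gt hAr)]
    exact key
  have hs1 : s ≤ 1 := by
    have : 0 ≤ b / t2 := div_nonneg hb ht2pos.le
    linarith
  have hst2 : (1 - s) * t2 = b := by
    have : 1 - s = b / t2 := by linarith
    rw [this, div_mul_cancel₀ b (ne_of_gt ht2pos)]
  -- candidate x-coordinates
  set x1 : ℝ := t1 * p.1 + (1 - t1) * r.1 with hx1
  set x2 : ℝ := t2 * q.1 + (1 - t2) * r.1 with hx2
  clear_value t1 t2 s
  have hAx : A.1 = s * x1 + (1 - s) * x2 := by
    rw [hx1, hx2, h1]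
    linear_combination (r.1 - p.1) * hst1 + (r.1 - q.1) * hst2 + r.1 * habc
  have hy1 : t1 * p.2 + (1 - t1) * r.2 = A.2 := by
    have : t1 * (p.2 - r.2) = A.2 - r.2 := by
      rw [ht1, div_mul_cancel₀ _ (ne_of_gt hpr)]
    linarith
  have hy2 : t2 * q.2 + (1 - t2) * r.2 = A.2 := by
    have : t2 * (q.2 - r.2) = A.2 - r.2 := by
      rw [ht2, div_mul_cancel₀ _ (ne_of_gt hqr)]
    linarith
  rcases le_total x1 x2 with hx | hx
  · refine ⟨(x2, A.2), rfl, ?_, Or.inr ⟨t2, 1 - t2, ht2pos.le, by linarith, by ring, ?_⟩⟩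
    · nlinarith
    · apply Prod.ext <;> simp [hx2, hy2]
  · refine ⟨(x1, A.2), rfl, ?_, Or.inl ⟨t1, 1 - t1, ht1pos.le, by linarith, by ring, ?_⟩⟩
    · nlinarith
    · apply Prod.ext <;> simp [hx1, hy1]

lemma triCore' (p q r A : ℝ × ℝ) (a b c : ℝ) (ha : 0 ≤ a) (hb : 0 ≤ b) (hc : 0 ≤ c)
    (habc : a + b + c = 1)
    (h1 : A.1 = a * p.1 + b * q.1 + c * r.1)
    (h2 : A.2 = a * p.2 + b * q.2 + c * r.2)
    (hp : p.2 ≤ A.2) (hq : q.2 ≤ A.2) (hr : A.2 < r.2) :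
    ∃ B : ℝ × ℝ, B.2 = A.2 ∧ A.1 ≤ B.1 ∧
      (B ∈ segment ℝ p r ∨ B ∈ segment ℝ q r) := by
  obtain ⟨B, hB2, hB1, hBs⟩ := triCore (p.1, -p.2) (q.1, -q.2) (r.1, -r.2) (A.1, -A.2)
    a b c ha hb hc habc (by simpa using h1) (by simp; linarith) (by simpa using hp)
    (by simpa using hq) (by simpa using hr)
  simp only at hB2 hB1
  refine ⟨(B.1, -B.2), by simp [hB2], hB1, ?_⟩
  rcases hBs with h | h
  · left
    obtain ⟨u, v, hu, hv, huv, heq⟩ := h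
    refine ⟨u, v, hu, hv, huv, ?_⟩
    have e1 := congrArg Prod.fst heq
    have e2 := congrArg Prod.snd heq
    simp only [Prod.fst_add, Prod.snd_add, Prod.smul_fst, Prod.smul_snd, smul_eq_mul] at e1 e2
    apply Prod.ext <;> simp [Prod.fst_add, Prod.snd_add] <;> linarith
  · right
    obtain ⟨u, v, hu, hv, huv, heq⟩ := h
    refine ⟨u, v, hu, hv, huv, ?_⟩
    have e1 := congrArg Prod.fst heq
    have e2 := congrArg Prod.snd heq
    simp only [Prod.fst_add, Prod.snd_add, Prod.smul_fst, Prod.smul_snd, smul_eq_mul] at e1 e2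
    apply Prod.ext <;> simp [Prod.fst_add, Prod.snd_add] <;> linarith

lemma pack (S : Finset (ℝ × ℝ)) (A B p r : ℝ × ℝ) (hp : p ∈ S) (hr : r ∈ S)
    (hseg : B ∈ segment ℝ p r) (h2 : B.2 = A.2) (h1 : A.1 ≤ B.1) :
    ∃ B ∈ convexHull ℝ (S : Set (ℝ × ℝ)),
      B.2 = A.2 ∧ A.1 ≤ B.1 ∧
      ∃ T : Finset (ℝ × ℝ), T ⊆ S ∧ T.card ≤ 2 ∧
        B ∈ convexHull ℝ (T : Set (ℝ × ℝ)) := by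
  refine ⟨B, ?_, h2, h1, {p, r}, ?_, ?_, ?_⟩
  · exact (convex_convexHull ℝ _).segment_subset (subset_convexHull _ _ hp)
      (subset_convexHull _ _ hr) hseg
  · intro x hx
    simp only [Finset.mem_insert, Finset.mem_singleton] at hx
    rcases hx with rfl | rfl <;> assumption
  · exact (Finset.card_insert_le _ _).trans (by simp)
  · have : (({p, r} : Finset (ℝ × ℝ)) : Set (ℝ × ℝ)) = {p, r} := by simp
    rw [this, convexHull_pair]
    exact hseg

set_option maxHeartbeats 1000000 in

/-- For any point `A` in the convex hull of a finite set `S ⊆ ℝ²`, there is a point `B`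
in the hull with the same second coordinate, first coordinate at least that of `A`,
lying in the convex hull of at most two points of `S`. -/
theorem stmt1 (S : Finset (ℝ × ℝ)) (A : ℝ × ℝ)
    (hA : A ∈ convexHull ℝ (S : Set (ℝ × ℝ))) :
    ∃ B ∈ convexHull ℝ (S : Set (ℝ × ℝ)),
      B.2 = A.2 ∧ A.1 ≤ B.1 ∧
      ∃ T : Finset (ℝ × ℝ), T ⊆ S ∧ T.card ≤ 2 ∧
        B ∈ convexHull ℝ (T : Set (ℝ × ℝ)) := by
  classical
  have hA0 := hA
  rw [convexHull_eq_union] at hA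
  simp only [Set.mem_iUnion] at hA
  obtain ⟨t, hts, hai, hAt⟩ := hA
  have hcard : t.card ≤ 3 := by
    have h := hai.card_le_finrank_succ
    rw [Fintype.card_coe] at h
    have h2 : Module.finrank ℝ (vectorSpan ℝ (Set.range ((↑) : t → ℝ × ℝ)))
        ≤ Module.finrank ℝ (ℝ × ℝ) := Submodule.finrank_le _
    have h3 : Module.finrank ℝ (ℝ × ℝ) = 2 := by
      simp [Module.finrank_prod]
    omega
  have htsub : t ⊆ S := by exact_mod_cast hts
  by_cases hle2 : t.card ≤ 2
  · exact ⟨A, hA0, rfl, le_refl _, t, htsub, hle2, hAt⟩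
  have h3 : t.card = 3 := le_antisymm hcard (by omega)
  obtain ⟨p, q, r, hpq, hpr, hqr, rfl⟩ := Finset.card_eq_three.mp h3
  have hpS : p ∈ S := htsub (by simp)
  have hqS : q ∈ S := htsub (by simp)
  have hrS : r ∈ S := htsub (by simp)
  -- extract convex combination A = a p + b q + c r
  have hset : ((({p, q, r} : Finset (ℝ × ℝ))) : Set (ℝ × ℝ)) = insert p {q, r} := by simp
  rw [hset, convexHull_insert (by exact ⟨q, by simp⟩), mem_convexJoin] at hAt
  obtain ⟨x, hx, z, hz, hAseg⟩ := hAt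
  rw [Set.mem_singleton_iff] at hx
  rw [hx] at hAseg
  rw [convexHull_pair] at hz
  obtain ⟨u, u', hu, hu', huu, hA3⟩ := hAseg
  obtain ⟨v, v', hv, hv', hvv, hz3⟩ := hz
  set a := u with hadef
  set b := u' * v with hbdef
  set c := u' * v' with hcdef
  have ha : 0 ≤ a := hu
  have hb : 0 ≤ b := mul_nonneg hu' hv
  have hc : 0 ≤ c := mul_nonneg hu' hv'
  have habc : a + b + c = 1 := by
    rw [hadef, hbdef, hcdef]
    nlinarith
  have ez1 : v * q.1 + v' * r.1 = z.1 := by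
    have := congrArg Prod.fst hz3
    simpa using this
  have ez2 : v * q.2 + v' * r.2 = z.2 := by
    have := congrArg Prod.snd hz3
    simpa using this
  have eA1 : u * p.1 + u' * z.1 = A.1 := by
    have := congrArg Prod.fst hA3
    simpa using this
  have eA2 : u * p.2 + u' * z.2 = A.2 := by
    have := congrArg Prod.snd hA3
    simpa using this
  have h1 : A.1 = a * p.1 + b * q.1 + c * r.1 := by
    rw [hadef, hbdef, hcdef]
    linear_combination -eA1 - u' * ez1
  have h2 : A.2 = a * p.2 + b * q.2 + c * r.2 := by
    rw [hadef, hbdef, hcdef]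
    linear_combination -eA2 - u' * ez2
  clear_value a b c
  clear hA3 hz3 ez1 ez2 eA1 eA2 huu hvv hu hu' hv hv' hadef hbdef hcdef hai hts
  -- weighted deviations sum to zero
  have hsum : a * (p.2 - A.2) + b * (q.2 - A.2) + c * (r.2 - A.2) = 0 := by
    linear_combination -h2 - A.2 * habc
  rcases le_or_gt A.2 p.2 with hp2 | hp2 <;>
    rcases le_or_gt A.2 q.2 with hq2 | hq2 <;>
    rcases le_or_gt A.2 r.2 with hr2 | hr2
  -- case 1 : all weakly above
  · have e1 : a * (p.2 - A.2) = 0 := by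
      nlinarith [mul_nonneg ha (sub_nonneg.2 hp2), mul_nonneg hb (sub_nonneg.2 hq2),
        mul_nonneg hc (sub_nonneg.2 hr2)]
    have e2 : b * (q.2 - A.2) = 0 := by
      nlinarith [mul_nonneg ha (sub_nonneg.2 hp2), mul_nonneg hb (sub_nonneg.2 hq2),
        mul_nonneg hc (sub_nonneg.2 hr2)]
    have e3 : c * (r.2 - A.2) = 0 := by
      nlinarith [mul_nonneg ha (sub_nonneg.2 hp2), mul_nonneg hb (sub_nonneg.2 hq2),
        mul_nonneg hc (sub_nonneg.2 hr2)]
    by_cases ha0 : a = 0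
    · subst ha0
      refine pack S A A q r hqS hrS ⟨b, c, hb, hc, by linarith, ?_⟩ rfl le_rfl
      apply Prod.ext <;> simp only [Prod.fst_add, Prod.snd_add, Prod.smul_fst,
        Prod.smul_snd, smul_eq_mul] <;> linarith
    have hpA : p.2 = A.2 := by
      rcases mul_eq_zero.mp e1 with h | h
      · exact absurd h ha0
      · linarith
    by_cases hb0 : b = 0
    · subst hb0
      refine pack S A A p r hpS hrS ⟨a, c, ha, hc, by linarith, ?_⟩ rfl le_rfl
      apply Prod.ext <;> simp only [Prod.fst_add, Prod.snd_add, Prod.smul_fst,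
        Prod.smul_snd, smul_eq_mul] <;> linarith
    have hqA : q.2 = A.2 := by
      rcases mul_eq_zero.mp e2 with h | h
      · exact absurd h hb0
      · linarith
    by_cases hc0 : c = 0
    · subst hc0
      refine pack S A A p q hpS hqS ⟨a, b, ha, hb, by linarith, ?_⟩ rfl le_rfl
      apply Prod.ext <;> simp only [Prod.fst_add, Prod.snd_add, Prod.smul_fst,
        Prod.smul_snd, smul_eq_mul] <;> linarith
    have hrA : r.2 = A.2 := by
      rcases mul_eq_zero.mp e3 with h | h
      · exact absurd h hc0
      · linarith
    -- all three on the line: pick the one with max first coordinate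
    rcases le_total p.1 q.1 with hh | hh
    · rcases le_total q.1 r.1 with hh' | hh'
      · refine pack S A r r r hrS hrS (left_mem_segment ℝ r r) hrA ?_
        have e : a * r.1 + b * r.1 + c * r.1 = r.1 := by linear_combination r.1 * habc
        linarith [mul_nonneg ha (sub_nonneg.2 (hh.trans hh')), mul_nonneg hb (sub_nonneg.2 hh'),
          e, h1]
      · refine pack S A q q q hqS hqS (left_mem_segment ℝ q q) hqA ?_
        have e : a * q.1 + b * q.1 + c * q.1 = q.1 := by linear_combination q.1 * habc
        linarith [mul_nonneg ha (sub_nonneg.2 hh), mul_nonneg hc (sub_nonneg.2 hh'), e, h1]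
    · rcases le_total p.1 r.1 with hh' | hh'
      · refine pack S A r r r hrS hrS (left_mem_segment ℝ r r) hrA ?_
        have e : a * r.1 + b * r.1 + c * r.1 = r.1 := by linear_combination r.1 * habc
        linarith [mul_nonneg ha (sub_nonneg.2 hh'), mul_nonneg hb (sub_nonneg.2 (hh.trans hh')),
          e, h1]
      · refine pack S A p p p hpS hpS (left_mem_segment ℝ p p) hpA ?_
        have e : a * p.1 + b * p.1 + c * p.1 = p.1 := by linear_combination p.1 * habc
        linarith [mul_nonneg hb (sub_nonneg.2 hh), mul_nonneg hc (sub_nonneg.2 hh'), e, h1]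
  -- case 2 : p, q above, r strictly below
  · obtain ⟨B, hB2, hB1, hBs⟩ := triCore p q r A a b c ha hb hc habc h1 h2 hp2 hq2 hr2
    rcases hBs with h | h
    · exact pack S A B p r hpS hrS h hB2 hB1
    · exact pack S A B q r hqS hrS h hB2 hB1
  -- case 3 : p, r above, q strictly below
  · obtain ⟨B, hB2, hB1, hBs⟩ := triCore p r q A a c b ha hc hb (by linarith)
      (by linarith) (by linarith) hp2 hr2 hq2
    rcases hBs with h | h
    · exact pack S A B p q hpS hqS h hB2 hB1
    · exact pack S A B r q hrS hqS h hB2 hB1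
  -- case 4 : p above, q r strictly below
  · rcases eq_or_lt_of_le hp2 with hpeq | hplt
    · -- p on the line, b = c = 0
      have e2 : b * (q.2 - A.2) = 0 := by
        have e1 : a * (p.2 - A.2) = 0 := by rw [← hpeq]; ring_nf
        nlinarith [mul_nonpos_of_nonneg_of_nonpos hb (by linarith : q.2 - A.2 ≤ 0),
          mul_nonpos_of_nonneg_of_nonpos hc (by linarith : r.2 - A.2 ≤ 0)]
      have e3 : c * (r.2 - A.2) = 0 := by
        have e1 : a * (p.2 - A.2) = 0 := by rw [← hpeq]; ring_nf
        nlinarith [mul_nonpos_of_nonneg_of_nonpos hb (by linarith : q.2 - A.2 ≤ 0),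
          mul_nonpos_of_nonneg_of_nonpos hc (by linarith : r.2 - A.2 ≤ 0)]
      have hb0 : b = 0 := by
        rcases mul_eq_zero.mp e2 with h | h
        · exact h
        · exfalso; linarith
      have hc0 : c = 0 := by
        rcases mul_eq_zero.mp e3 with h | h
        · exact h
        · exfalso; linarith
      subst hb0; subst hc0
      have ha1 : a = 1 := by linarith
      subst ha1
      refine pack S A p p p hpS hpS (left_mem_segment ℝ p p) hpeq.symm ?_
      linarith [h1]
    · obtain ⟨B, hB2, hB1, hBs⟩ := triCore' q r p A b c a hb hc ha (by linarith)
        (by linarith) (by linarith) hq2.le hr2.le hplt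
      rcases hBs with h | h
      · exact pack S A B q p hqS hpS h hB2 hB1
      · exact pack S A B r p hrS hpS h hB2 hB1
  -- case 5 : q, r above, p strictly below
  · obtain ⟨B, hB2, hB1, hBs⟩ := triCore q r p A b c a hb hc ha (by linarith)
      (by linarith) (by linarith) hq2 hr2 hp2
    rcases hBs with h | h
    · exact pack S A B q p hqS hpS h hB2 hB1
    · exact pack S A B r p hrS hpS h hB2 hB1
  -- case 6 : q above, p r strictly below
  · rcases eq_or_lt_of_le hq2 with hqeq | hqlt
    · have e2 : a * (p.2 - A.2) = 0 := by
        have e1 : b * (q.2 - A.2) = 0 := by rw [← hqeq]; ring_nf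
        nlinarith [mul_nonpos_of_nonneg_of_nonpos ha (by linarith : p.2 - A.2 ≤ 0),
          mul_nonpos_of_nonneg_of_nonpos hc (by linarith : r.2 - A.2 ≤ 0)]
      have e3 : c * (r.2 - A.2) = 0 := by
        have e1 : b * (q.2 - A.2) = 0 := by rw [← hqeq]; ring_nf
        nlinarith [mul_nonpos_of_nonneg_of_nonpos ha (by linarith : p.2 - A.2 ≤ 0),
          mul_nonpos_of_nonneg_of_nonpos hc (by linarith : r.2 - A.2 ≤ 0)]
      have ha0 : a = 0 := by
        rcases mul_eq_zero.mp e2 with h | h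
        · exact h
        · exfalso; linarith
      have hc0 : c = 0 := by
        rcases mul_eq_zero.mp e3 with h | h
        · exact h
        · exfalso; linarith
      subst ha0; subst hc0
      have hb1 : b = 1 := by linarith
      subst hb1
      refine pack S A q q q hqS hqS (left_mem_segment ℝ q q) hqeq.symm ?_
      linarith [h1]
    · obtain ⟨B, hB2, hB1, hBs⟩ := triCore' p r q A a c b ha hc hb (by linarith)
        (by linarith) (by linarith) hp2.le hr2.le hqlt
      rcases hBs with h | h
      · exact pack S A B p q hpS hqS h hB2 hB1
      · exact pack S A B r q hrS hqS h hB2 hB1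
  -- case 7 : r above, p q strictly below
  · rcases eq_or_lt_of_le hr2 with hreq | hrlt
    · have e2 : a * (p.2 - A.2) = 0 := by
        have e1 : c * (r.2 - A.2) = 0 := by rw [← hreq]; ring_nf
        nlinarith [mul_nonpos_of_nonneg_of_nonpos ha (by linarith : p.2 - A.2 ≤ 0),
          mul_nonpos_of_nonneg_of_nonpos hb (by linarith : q.2 - A.2 ≤ 0)]
      have e3 : b * (q.2 - A.2) = 0 := by
        have e1 : c * (r.2 - A.2) = 0 := by rw [← hreq]; ring_nf
        nlinarith [mul_nonpos_of_nonneg_of_nonpos ha (by linarith : p.2 - A.2 ≤ 0),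
          mul_nonpos_of_nonneg_of_nonpos hb (by linarith : q.2 - A.2 ≤ 0)]
      have ha0 : a = 0 := by
        rcases mul_eq_zero.mp e2 with h | h
        · exact h
        · exfalso; linarith
      have hb0 : b = 0 := by
        rcases mul_eq_zero.mp e3 with h | h
        · exact h
        · exfalso; linarith
      subst ha0; subst hb0
      have hc1 : c = 1 := by linarith
      subst hc1
      refine pack S A r r r hrS hrS (left_mem_segment ℝ r r) hreq.symm ?_
      linarith [h1]
    · obtain ⟨B, hB2, hB1, hBs⟩ := triCore' p q r A a b c ha hb hc habc h1 h2
        hp2.le hq2.le hrlt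
      rcases hBs with h | h
      · exact pack S A B p r hpS hrS h hB2 hB1
      · exact pack S A B q r hqS hrS h hB2 hB1
  -- case 8 : all strictly below, impossible
  · exfalso
    have e1 : a * (p.2 - A.2) = 0 := by
      nlinarith [mul_nonpos_of_nonneg_of_nonpos ha (by linarith : p.2 - A.2 ≤ 0),
        mul_nonpos_of_nonneg_of_nonpos hb (by linarith : q.2 - A.2 ≤ 0),
        mul_nonpos_of_nonneg_of_nonpos hc (by linarith : r.2 - A.2 ≤ 0)]
    have e2 : b * (q.2 - A.2) = 0 := by
      nlinarith [mul_nonpos_of_nonneg_of_nonpos ha (by linarith : p.2 - A.2 ≤ 0),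
        mul_nonpos_of_nonneg_of_nonpos hb (by linarith : q.2 - A.2 ≤ 0),
        mul_nonpos_of_nonneg_of_nonpos hc (by linarith : r.2 - A.2 ≤ 0)]
    have e3 : c * (r.2 - A.2) = 0 := by
      nlinarith [mul_nonpos_of_nonneg_of_nonpos ha (by linarith : p.2 - A.2 ≤ 0),
        mul_nonpos_of_nonneg_of_nonpos hb (by linarith : q.2 - A.2 ≤ 0),
        mul_nonpos_of_nonneg_of_nonpos hc (by linarith : r.2 - A.2 ≤ 0)]
    have ha0 : a = 0 := by
      rcases mul_eq_zero.mp e1 with h | h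
      · exact h
      · exfalso; linarith
    have hb0 : b = 0 := by
      rcases mul_eq_zero.mp e2 with h | h
      · exact h
      · exfalso; linarith
    have hc0 : c = 0 := by
      rcases mul_eq_zero.mp e3 with h | h
      · exact h
      · exfalso; linarith
    linarith
end

section
/- For every Strong Stackelberg Equilibrium (σ_1, σ_2) of a finite sequential game on a DAG without chance nodes, there exists a pure follower strategy σ̂_2 such that (σ_1, σ̂_2) is also a Strong Stackelberg Equilibrium; in particular σ̂_2 is a best response to σ_1, u_1(σ_1, σ̂_2) ≥ u_1(σ_1, σ_2), and u_2(σ_1, σ̂_2) = u_2(σ_1, σ_2). -/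
/-- The current node of a history (its last element), with `root` as default. -/
def cur {V : Type*} (root : V) (h : List V) : V := h.getLastD root

/-- A valid history: starts at the root and follows edges of the game graph. -/
def IsHist {V : Type*} (children : V → Finset V) (root : V) (h : List V) : Prop :=
  h.head? = some root ∧ h.Chain' (fun a b => b ∈ children a)

/-- Expected utility (w.r.t. leaf utilities `u`) of the continuation from history `h`
under the combined behavioral profile `τ`, computed with `fuel` steps of lookahead. -/
def EU {V : Type*} [DecidableEq V] (children : V → Finset V) (root : V) (u : V → ℝ)
    (τ : List V → V → ℝ) : ℕ → List V → ℝ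
  | 0, h => u (cur root h)
  | n + 1, h =>
      if children (cur root h) = ∅ then u (cur root h)
      else ∑ w ∈ children (cur root h), τ h w * EU children root u τ n (h ++ [w])

/-- A valid behavioral strategy: nonnegative and summing to one over the children. -/
def ValidStrat {V : Type*} (children : V → Finset V) (root : V)
    (σ : List V → V → ℝ) : Prop :=
  (∀ h w, 0 ≤ σ h w) ∧
  ∀ h : List V, (children (cur root h)).Nonempty →
    ∑ w ∈ children (cur root h), σ h w = 1

/-- The combined profile: the owner of the current node decides. -/
def combine {V : Type*} (owner : V → Bool) (root : V)
    (σ1 σ2 : List V → V → ℝ) : List V → V → ℝ :=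
  fun h w => if owner (cur root h) = true then σ1 h w else σ2 h w

/-- The expected utility (w.r.t. leaf utilities `u`) of a strategy profile, from the root. -/
def payoff {V : Type*} [Fintype V] [DecidableEq V] (children : V → Finset V)
    (root : V) (owner : V → Bool) (u : V → ℝ) (σ1 σ2 : List V → V → ℝ) : ℝ :=
  EU children root u (combine owner root σ1 σ2) (Fintype.card V) [root]

/-- `σ2` is a best response of the follower to the leader's strategy `σ1`. -/
def BestResponse {V : Type*} [Fintype V] [DecidableEq V] (children : V → Finset V)
    (root : V) (owner : V → Bool) (u2 : V → ℝ) (σ1 σ2 : List V → V → ℝ) : Prop :=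
  ValidStrat children root σ2 ∧
  ∀ σ2', ValidStrat children root σ2' →
    payoff children root owner u2 σ1 σ2' ≤ payoff children root owner u2 σ1 σ2

/-- Strong Stackelberg Equilibrium: `σ2` is a best response to `σ1`, and the pair
maximizes the leader's expected utility among all such pairs. -/
def IsSSE {V : Type*} [Fintype V] [DecidableEq V] (children : V → Finset V)
    (root : V) (owner : V → Bool) (u1 u2 : V → ℝ) (σ1 σ2 : List V → V → ℝ) : Prop :=
  ValidStrat children root σ1 ∧
  BestResponse children root owner u2 σ1 σ2 ∧
  ∀ σ1' σ2', ValidStrat children root σ1' →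
    BestResponse children root owner u2 σ1' σ2' →
    payoff children root owner u1 σ1' σ2' ≤ payoff children root owner u1 σ1 σ2

set_option linter.unusedSectionVars false
section Aux
variable {V : Type*} [Fintype V] [DecidableEq V]
variable (children : V → Finset V) (root : V) (owner : V → Bool) (u1 u2 : V → ℝ)
variable (σ1 : List V → V → ℝ)

noncomputable def Val2 : ℕ → List V → ℝ
  | 0, h => u2 (cur root h)
  | n + 1, h =>
      if hc : children (cur root h) = ∅ then u2 (cur root h)
      else if owner (cur root h) = true then
        ∑ w ∈ children (cur root h), σ1 h w * Val2 n (h ++ [w])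
      else (children (cur root h)).sup' (Finset.nonempty_iff_ne_empty.mpr hc)
        (fun w => Val2 n (h ++ [w]))

noncomputable def BRset (n : ℕ) (h : List V) : Finset V :=
  if hc : children (cur root h) = ∅ then ∅
  else (children (cur root h)).filter
    (fun w => Val2 children root owner u2 σ1 n (h ++ [w]) =
      (children (cur root h)).sup' (Finset.nonempty_iff_ne_empty.mpr hc)
        (fun w => Val2 children root owner u2 σ1 n (h ++ [w])))

lemma BRset_subset (n : ℕ) (h : List V) :
    BRset children root owner u2 σ1 n h ⊆ children (cur root h) := by
  unfold BRset
  split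
  · simp
  · exact Finset.filter_subset _ _

lemma BRset_nonempty {n : ℕ} {h : List V} (hc : ¬ children (cur root h) = ∅) :
    (BRset children root owner u2 σ1 n h).Nonempty := by
  unfold BRset
  rw [dif_neg hc]
  obtain ⟨b, hb, he⟩ := Finset.exists_mem_eq_sup' (Finset.nonempty_iff_ne_empty.mpr hc)
    (fun w => Val2 children root owner u2 σ1 n (h ++ [w]))
  exact ⟨b, Finset.mem_filter.mpr ⟨hb, he.symm⟩⟩

lemma mem_BRset {n : ℕ} {h : List V} {w : V} (hc : ¬ children (cur root h) = ∅) :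
    w ∈ BRset children root owner u2 σ1 n h ↔
      w ∈ children (cur root h) ∧
      Val2 children root owner u2 σ1 n (h ++ [w]) =
        (children (cur root h)).sup' (Finset.nonempty_iff_ne_empty.mpr hc)
          (fun w => Val2 children root owner u2 σ1 n (h ++ [w])) := by
  unfold BRset
  rw [dif_neg hc, Finset.mem_filter]

noncomputable def Val1 : ℕ → List V → ℝ
  | 0, h => u1 (cur root h)
  | n + 1, h =>
      if hc : children (cur root h) = ∅ then u1 (cur root h)
      else if owner (cur root h) = true then
        ∑ w ∈ children (cur root h), σ1 h w * Val1 n (h ++ [w])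
      else (BRset children root owner u2 σ1 n h).sup'
        (BRset_nonempty children root owner u2 σ1 hc)
        (fun w => Val1 n (h ++ [w]))

noncomputable def pick (n : ℕ) (h : List V) : V :=
  if hc : children (cur root h) = ∅ then root
  else Classical.choose (Finset.exists_mem_eq_sup'
    (BRset_nonempty children root owner u2 σ1 (n := n) (h := h) hc)
    (fun w => Val1 children root owner u1 u2 σ1 n (h ++ [w])))

lemma pick_spec {n : ℕ} {h : List V} (hc : ¬ children (cur root h) = ∅) :
    pick children root owner u1 u2 σ1 n h ∈ BRset children root owner u2 σ1 n h ∧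
    (BRset children root owner u2 σ1 n h).sup'
      (BRset_nonempty children root owner u2 σ1 hc)
      (fun w => Val1 children root owner u1 u2 σ1 n (h ++ [w])) =
      Val1 children root owner u1 u2 σ1 n (h ++ [pick children root owner u1 u2 σ1 n h]) := by
  unfold pick
  rw [dif_neg hc]
  obtain ⟨hm, he⟩ := Classical.choose_spec (Finset.exists_mem_eq_sup'
    (BRset_nonempty children root owner u2 σ1 (n := n) (h := h) hc)
    (fun w => Val1 children root owner u1 u2 σ1 n (h ++ [w])))
  exact ⟨hm, he⟩

noncomputable def hatσ2 : List V → V → ℝ :=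
  fun h w => if w = pick children root owner u1 u2 σ1 (Fintype.card V - h.length) h then 1 else 0

-- clean rewriting lemmas
lemma Val2_leaf {n : ℕ} {h : List V} (hc : children (cur root h) = ∅) :
    Val2 children root owner u2 σ1 (n + 1) h = u2 (cur root h) := by
  rw [Val2, dif_pos hc]

lemma Val2_leader {n : ℕ} {h : List V} (hc : ¬ children (cur root h) = ∅)
    (how : owner (cur root h) = true) :
    Val2 children root owner u2 σ1 (n + 1) h =
      ∑ w ∈ children (cur root h), σ1 h w * Val2 children root owner u2 σ1 n (h ++ [w]) := by
  rw [Val2, dif_neg hc, if_pos how]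

lemma Val2_follower {n : ℕ} {h : List V} (hc : ¬ children (cur root h) = ∅)
    (how : ¬ owner (cur root h) = true) :
    Val2 children root owner u2 σ1 (n + 1) h =
      (children (cur root h)).sup' (Finset.nonempty_iff_ne_empty.mpr hc)
        (fun w => Val2 children root owner u2 σ1 n (h ++ [w])) := by
  rw [Val2, dif_neg hc, if_neg how]

lemma Val1_leaf {n : ℕ} {h : List V} (hc : children (cur root h) = ∅) :
    Val1 children root owner u1 u2 σ1 (n + 1) h = u1 (cur root h) := by
  rw [Val1, dif_pos hc]

lemma Val1_leader {n : ℕ} {h : List V} (hc : ¬ children (cur root h) = ∅)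
    (how : owner (cur root h) = true) :
    Val1 children root owner u1 u2 σ1 (n + 1) h =
      ∑ w ∈ children (cur root h), σ1 h w * Val1 children root owner u1 u2 σ1 n (h ++ [w]) := by
  rw [Val1, dif_neg hc, if_pos how]

lemma Val1_follower {n : ℕ} {h : List V} (hc : ¬ children (cur root h) = ∅)
    (how : ¬ owner (cur root h) = true) :
    Val1 children root owner u1 u2 σ1 (n + 1) h =
      (BRset children root owner u2 σ1 n h).sup'
        (BRset_nonempty children root owner u2 σ1 hc)
        (fun w => Val1 children root owner u1 u2 σ1 n (h ++ [w])) := by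
  rw [Val1, dif_neg hc, if_neg how]


lemma support_eq {s : Finset V} {p x y : V → ℝ} (hp : ∀ w ∈ s, 0 ≤ p w)
    (hxy : ∀ w ∈ s, x w ≤ y w)
    (heq : ∑ w ∈ s, p w * x w = ∑ w ∈ s, p w * y w) :
    ∀ w ∈ s, p w = 0 ∨ x w = y w := by
  have h0 : ∑ w ∈ s, p w * (y w - x w) = 0 := by
    simp only [mul_sub]
    rw [Finset.sum_sub_distrib, heq, sub_self]
  have hz := (Finset.sum_eq_zero_iff_of_nonneg
    (fun w hw => mul_nonneg (hp w hw) (by linarith [hxy w hw]))).mp h0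
  intro w hw
  rcases mul_eq_zero.mp (hz w hw) with h | h
  · exact Or.inl h
  · exact Or.inr (by linarith [sub_eq_zero.mp h])

lemma EU_le_Val2 (hσ1 : ValidStrat children root σ1) {σ2' : List V → V → ℝ}
    (hσ2' : ValidStrat children root σ2') :
    ∀ n h, EU children root u2 (combine owner root σ1 σ2') n h ≤
      Val2 children root owner u2 σ1 n h := by
  intro n
  induction n with
  | zero => intro h; exact le_of_eq rfl
  | succ n ih =>
    intro h
    by_cases hc : children (cur root h) = ∅
    · rw [EU, if_pos hc, Val2_leaf children root owner u2 σ1 hc]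
    · by_cases how : owner (cur root h) = true
      · rw [EU, if_neg hc, Val2_leader children root owner u2 σ1 hc how]
        refine Finset.sum_le_sum ?_
        intro w hw
        have hcb : combine owner root σ1 σ2' h w = σ1 h w := by simp [combine, how]
        rw [hcb]
        exact mul_le_mul_of_nonneg_left (ih _) (hσ1.1 h w)
      · rw [EU, if_neg hc, Val2_follower children root owner u2 σ1 hc how]
        have hne : (children (cur root h)).Nonempty := Finset.nonempty_iff_ne_empty.mpr hc
        calc ∑ w ∈ children (cur root h), combine owner root σ1 σ2' h w *
              EU children root u2 (combine owner root σ1 σ2') n (h ++ [w])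
            ≤ ∑ w ∈ children (cur root h), σ2' h w *
              ((children (cur root h)).sup' hne
                (fun w => Val2 children root owner u2 σ1 n (h ++ [w]))) := by
              refine Finset.sum_le_sum ?_
              intro w hw
              have hcb : combine owner root σ1 σ2' h w = σ2' h w := by simp [combine, how]
              rw [hcb]
              exact mul_le_mul_of_nonneg_left
                (le_trans (ih _) (Finset.le_sup'
                  (fun w => Val2 children root owner u2 σ1 n (h ++ [w])) hw)) (hσ2'.1 h w)
          _ = _ := by rw [← Finset.sum_mul, hσ2'.2 h hne, one_mul]

lemma EU_hat_eq_Val2 :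
    ∀ n, ∀ h : List V, h.length + n = Fintype.card V + 1 →
    EU children root u2 (combine owner root σ1 (hatσ2 children root owner u1 u2 σ1)) n h =
      Val2 children root owner u2 σ1 n h := by
  intro n
  induction n with
  | zero => intro h _; rfl
  | succ n ih =>
    intro h hlen
    have hfl : Fintype.card V - h.length = n := by omega
    have hlen' : ∀ w : V, (h ++ [w]).length + n = Fintype.card V + 1 := by
      intro w; simp only [List.length_append, List.length_singleton]; omega
    by_cases hc : children (cur root h) = ∅
    · rw [EU, if_pos hc, Val2_leaf children root owner u2 σ1 hc]
    · by_cases how : owner (cur root h) = true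
      · rw [EU, if_neg hc, Val2_leader children root owner u2 σ1 hc how]
        refine Finset.sum_congr rfl ?_
        intro w hw
        have hcb : combine owner root σ1 (hatσ2 children root owner u1 u2 σ1) h w = σ1 h w := by
          simp [combine, how]
        rw [hcb, ih (h ++ [w]) (hlen' w)]
      · rw [EU, if_neg hc, Val2_follower children root owner u2 σ1 hc how]
        have hpm := (pick_spec children root owner u1 u2 σ1 (n := n) (h := h) hc).1
        have hpc : pick children root owner u1 u2 σ1 n h ∈ children (cur root h) :=
          BRset_subset children root owner u2 σ1 n h hpm
        have hterm : ∀ w ∈ children (cur root h),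
            combine owner root σ1 (hatσ2 children root owner u1 u2 σ1) h w *
              EU children root u2 (combine owner root σ1 (hatσ2 children root owner u1 u2 σ1)) n (h ++ [w]) =
            if w = pick children root owner u1 u2 σ1 n h then
              EU children root u2 (combine owner root σ1 (hatσ2 children root owner u1 u2 σ1)) n (h ++ [w])
            else 0 := by
          intro w hw
          have hcb : combine owner root σ1 (hatσ2 children root owner u1 u2 σ1) h w =
              if w = pick children root owner u1 u2 σ1 n h then 1 else 0 := by
            simp [combine, how, hatσ2, hfl]
          rw [hcb]
          split <;> ring
        rw [Finset.sum_congr rfl hterm, Finset.sum_ite_eq' (children (cur root h)), if_pos hpc,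
          ih _ (hlen' _)]
        exact ((mem_BRset children root owner u2 σ1 hc).mp hpm).2

lemma EU_hat_eq_Val1 :
    ∀ n, ∀ h : List V, h.length + n = Fintype.card V + 1 →
    EU children root u1 (combine owner root σ1 (hatσ2 children root owner u1 u2 σ1)) n h =
      Val1 children root owner u1 u2 σ1 n h := by
  intro n
  induction n with
  | zero => intro h _; rfl
  | succ n ih =>
    intro h hlen
    have hfl : Fintype.card V - h.length = n := by omega
    have hlen' : ∀ w : V, (h ++ [w]).length + n = Fintype.card V + 1 := by
      intro w; simp only [List.length_append, List.length_singleton]; omega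
    by_cases hc : children (cur root h) = ∅
    · rw [EU, if_pos hc, Val1_leaf children root owner u1 u2 σ1 hc]
    · by_cases how : owner (cur root h) = true
      · rw [EU, if_neg hc, Val1_leader children root owner u1 u2 σ1 hc how]
        refine Finset.sum_congr rfl ?_
        intro w hw
        have hcb : combine owner root σ1 (hatσ2 children root owner u1 u2 σ1) h w = σ1 h w := by
          simp [combine, how]
        rw [hcb, ih (h ++ [w]) (hlen' w)]
      · rw [EU, if_neg hc, Val1_follower children root owner u1 u2 σ1 hc how]
        have hpm := (pick_spec children root owner u1 u2 σ1 (n := n) (h := h) hc).1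
        have hpc : pick children root owner u1 u2 σ1 n h ∈ children (cur root h) :=
          BRset_subset children root owner u2 σ1 n h hpm
        have hterm : ∀ w ∈ children (cur root h),
            combine owner root σ1 (hatσ2 children root owner u1 u2 σ1) h w *
              EU children root u1 (combine owner root σ1 (hatσ2 children root owner u1 u2 σ1)) n (h ++ [w]) =
            if w = pick children root owner u1 u2 σ1 n h then
              EU children root u1 (combine owner root σ1 (hatσ2 children root owner u1 u2 σ1)) n (h ++ [w])
            else 0 := by
          intro w hw
          have hcb : combine owner root σ1 (hatσ2 children root owner u1 u2 σ1) h w =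
              if w = pick children root owner u1 u2 σ1 n h then 1 else 0 := by
            simp [combine, how, hatσ2, hfl]
          rw [hcb]
          split <;> ring
        rw [Finset.sum_congr rfl hterm, Finset.sum_ite_eq' (children (cur root h)), if_pos hpc,
          ih _ (hlen' _)]
        exact ((pick_spec children root owner u1 u2 σ1 (n := n) (h := h) hc).2).symm

lemma EU1_le_Val1 (hσ1 : ValidStrat children root σ1) {σ2 : List V → V → ℝ}
    (hσ2 : ValidStrat children root σ2) :
    ∀ n h,
      EU children root u2 (combine owner root σ1 σ2) n h = Val2 children root owner u2 σ1 n h →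
      EU children root u1 (combine owner root σ1 σ2) n h ≤ Val1 children root owner u1 u2 σ1 n h := by
  intro n
  induction n with
  | zero => intro h _; exact le_of_eq rfl
  | succ n ih =>
    intro h h2
    by_cases hc : children (cur root h) = ∅
    · rw [EU, if_pos hc, Val1_leaf children root owner u1 u2 σ1 hc]
    · by_cases how : owner (cur root h) = true
      · rw [EU, if_neg hc, Val1_leader children root owner u1 u2 σ1 hc how]
        rw [EU, if_neg hc, Val2_leader children root owner u2 σ1 hc how] at h2
        have hcb : ∀ w, combine owner root σ1 σ2 h w = σ1 h w := fun w => by simp [combine, how]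
        simp only [hcb] at h2 ⊢
        have key := support_eq (fun w _ => hσ1.1 h w)
          (fun w _ => EU_le_Val2 children root owner u2 σ1 hσ1 hσ2 n (h ++ [w])) h2
        refine Finset.sum_le_sum ?_
        intro w hw
        rcases key w hw with h0 | heqw
        · rw [h0, zero_mul, zero_mul]
        · exact mul_le_mul_of_nonneg_left (ih _ heqw) (hσ1.1 h w)
      · rw [EU, if_neg hc, Val1_follower children root owner u1 u2 σ1 hc how]
        rw [EU, if_neg hc, Val2_follower children root owner u2 σ1 hc how] at h2
        have hne : (children (cur root h)).Nonempty := Finset.nonempty_iff_ne_empty.mpr hc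
        have hcb : ∀ w, combine owner root σ1 σ2 h w = σ2 h w := fun w => by simp [combine, how]
        simp only [hcb] at h2 ⊢
        have h2' : ∑ w ∈ children (cur root h), σ2 h w *
              EU children root u2 (combine owner root σ1 σ2) n (h ++ [w]) =
            ∑ w ∈ children (cur root h), σ2 h w *
              ((children (cur root h)).sup' hne
                (fun w => Val2 children root owner u2 σ1 n (h ++ [w]))) := by
          rw [← Finset.sum_mul, hσ2.2 h hne, one_mul]
          simpa only [hcb] using h2
        have key := support_eq (fun w _ => hσ2.1 h w)
          (fun w hw => le_trans (EU_le_Val2 children root owner u2 σ1 hσ1 hσ2 n (h ++ [w]))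
            (Finset.le_sup' (fun w => Val2 children root owner u2 σ1 n (h ++ [w])) hw)) h2'
        have hterm : ∀ w ∈ children (cur root h),
            σ2 h w * EU children root u1 (combine owner root σ1 σ2) n (h ++ [w]) ≤
            σ2 h w * ((BRset children root owner u2 σ1 n h).sup'
              (BRset_nonempty children root owner u2 σ1 hc)
              (fun w => Val1 children root owner u1 u2 σ1 n (h ++ [w]))) := by
          intro w hw
          rcases key w hw with h0 | heqw
          · rw [h0, zero_mul, zero_mul]
          · have hle := EU_le_Val2 children root owner u2 σ1 hσ1 hσ2 n (h ++ [w])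
            have hsup := Finset.le_sup' (fun w => Val2 children root owner u2 σ1 n (h ++ [w])) hw
            have hv2 : Val2 children root owner u2 σ1 n (h ++ [w]) =
                (children (cur root h)).sup' hne
                  (fun w => Val2 children root owner u2 σ1 n (h ++ [w])) := by
              linarith
            have hwB : w ∈ BRset children root owner u2 σ1 n h :=
              (mem_BRset children root owner u2 σ1 hc).mpr ⟨hw, hv2⟩
            have h1 := ih (h ++ [w]) (by linarith)
            exact mul_le_mul_of_nonneg_left
              (le_trans h1 (Finset.le_sup'
                (fun w => Val1 children root owner u1 u2 σ1 n (h ++ [w])) hwB)) (hσ2.1 h w)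
        calc ∑ w ∈ children (cur root h), σ2 h w *
              EU children root u1 (combine owner root σ1 σ2) n (h ++ [w])
            ≤ ∑ w ∈ children (cur root h), σ2 h w *
              ((BRset children root owner u2 σ1 n h).sup'
                (BRset_nonempty children root owner u2 σ1 hc)
                (fun w => Val1 children root owner u1 u2 σ1 n (h ++ [w]))) :=
              Finset.sum_le_sum hterm
          _ = _ := by rw [← Finset.sum_mul, hσ2.2 h hne, one_mul]

end Aux

/-- Lemma 2: for every SSE `(σ1, σ2)` there is a pure follower strategy `σ̂2` such that
`(σ1, σ̂2)` is again an SSE; it is a best response, weakly improves the leader's payoff,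
and preserves the follower's payoff. -/
theorem stmt9 {V : Type*} [Fintype V] [DecidableEq V]
    (children : V → Finset V) (root : V) (owner : V → Bool) (u1 u2 : V → ℝ)
    (hacyc : ∀ v, ¬ Relation.TransGen (fun a b => b ∈ children a) v v)
    (σ1 σ2 : List V → V → ℝ)
    (hSSE : IsSSE children root owner u1 u2 σ1 σ2) :
    ∃ σ2' : List V → V → ℝ,
      (∀ h w, σ2' h w = 0 ∨ σ2' h w = 1) ∧
      IsSSE children root owner u1 u2 σ1 σ2' ∧
      BestResponse children root owner u2 σ1 σ2' ∧
      payoff children root owner u1 σ1 σ2 ≤ payoff children root owner u1 σ1 σ2' ∧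
      payoff children root owner u2 σ1 σ2' = payoff children root owner u2 σ1 σ2 := by
  obtain ⟨hσ1, ⟨hσ2, hBR⟩, hmax⟩ := hSSE
  have hpure : ∀ h w, hatσ2 children root owner u1 u2 σ1 h w = 0 ∨
      hatσ2 children root owner u1 u2 σ1 h w = 1 := by
    intro h w
    unfold hatσ2
    split
    · exact Or.inr rfl
    · exact Or.inl rfl
  have hvalid : ValidStrat children root (hatσ2 children root owner u1 u2 σ1) := by
    constructor
    · intro h w
      unfold hatσ2
      split <;> norm_num
    · intro h hne
      have hc : ¬ children (cur root h) = ∅ := Finset.nonempty_iff_ne_empty.mp hne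
      have hpc : pick children root owner u1 u2 σ1 (Fintype.card V - h.length) h ∈
          children (cur root h) :=
        BRset_subset children root owner u2 σ1 _ h
          (pick_spec children root owner u1 u2 σ1 hc).1
      unfold hatσ2
      rw [Finset.sum_ite_eq' (children (cur root h)), if_pos hpc]
  have hroot : ([root] : List V).length + Fintype.card V = Fintype.card V + 1 := by simp; omega
  have hB2 : payoff children root owner u2 σ1 (hatσ2 children root owner u1 u2 σ1) =
      Val2 children root owner u2 σ1 (Fintype.card V) [root] :=
    EU_hat_eq_Val2 children root owner u1 u2 σ1 (Fintype.card V) [root] hroot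
  have hB1 : payoff children root owner u1 σ1 (hatσ2 children root owner u1 u2 σ1) =
      Val1 children root owner u1 u2 σ1 (Fintype.card V) [root] :=
    EU_hat_eq_Val1 children root owner u1 u2 σ1 (Fintype.card V) [root] hroot
  have hA : ∀ σ2'', ValidStrat children root σ2'' →
      payoff children root owner u2 σ1 σ2'' ≤
        Val2 children root owner u2 σ1 (Fintype.card V) [root] :=
    fun σ2'' hv => EU_le_Val2 children root owner u2 σ1 hσ1 hv (Fintype.card V) [root]
  have hBRhat : BestResponse children root owner u2 σ1 (hatσ2 children root owner u1 u2 σ1) := by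
    refine ⟨hvalid, fun σ2'' hv => ?_⟩
    rw [hB2]
    exact hA σ2'' hv
  have h2eq : payoff children root owner u2 σ1 (hatσ2 children root owner u1 u2 σ1) =
      payoff children root owner u2 σ1 σ2 :=
    le_antisymm (hBR _ hvalid) (hBRhat.2 σ2 hσ2)
  have h2val : payoff children root owner u2 σ1 σ2 =
      Val2 children root owner u2 σ1 (Fintype.card V) [root] := by
    rw [← h2eq, hB2]
  have h1le : payoff children root owner u1 σ1 σ2 ≤
      payoff children root owner u1 σ1 (hatσ2 children root owner u1 u2 σ1) := by
    rw [hB1]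
    exact EU1_le_Val1 children root owner u1 u2 σ1 hσ1 hσ2 (Fintype.card V) [root] h2val
  refine ⟨hatσ2 children root owner u1 u2 σ1, hpure, ⟨hσ1, hBRhat, ?_⟩, hBRhat, h1le, h2eq⟩
  intro σ1' σ2'' hv hbr
  exact le_trans (hmax σ1' σ2'' hv hbr) h1le
end

section
/- In any Strong Stackelberg Equilibrium where players may use history-dependent strategies, the leader's expected payoff is greater than or equal to the leader's expected payoff in any Strong Stackelberg Equilibrium where players are restricted to history-independent (memoryless) strategies. -/
/-- A strategy is memoryless (history-independent) if it depends only on the current node. -/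
def Memoryless {V : Type*} (root : V) (σ : List V → V → ℝ) : Prop :=
  ∀ h h' : List V, cur root h = cur root h' → ∀ w, σ h w = σ h' w

/-! Against a memoryless leader strategy the follower faces a finite acyclic decision problem,
so backward induction gives a value that no history-dependent follower strategy exceeds and
that a pure memoryless strategy (always move to a best child) attains. Hence a best response
within the memoryless class is a best response among all strategies, and the memoryless SSE
pair is a feasible candidate for the history-dependent SSE. -/

open Finset

section Histories

variable {V : Type*}

theorem cur_append (root : V) (h : List V) (w : V) : cur root (h ++ [w]) = w := by
  simp [cur, List.getLastD_eq_getLast?]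

theorem Memoryless.apply_eq {root : V} {σ : List V → V → ℝ} (hσ : Memoryless root σ)
    (h : List V) : σ h = σ [cur root h] :=
  funext (hσ h [cur root h] rfl)

end Histories

section ExpectedUtility

variable {V : Type*} [DecidableEq V] {children : V → Finset V} {root : V} {u : V → ℝ}
  {τ : List V → V → ℝ} {h : List V}

theorem EU_of_children_eq_empty (hc : children (cur root h) = ∅) (n : ℕ) :
    EU children root u τ n h = u (cur root h) := by
  cases n <;> simp [EU, hc]

theorem EU_succ_of_nonempty (hc : (children (cur root h)).Nonempty) (n : ℕ) :
    EU children root u τ (n + 1) h =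
      ∑ w ∈ children (cur root h), τ h w * EU children root u τ n (h ++ [w]) := by
  simp [EU, hc.ne_empty]

end ExpectedUtility

section PureStrategies

variable {V : Type*} [DecidableEq V]

def pureStrat (root : V) (c : V → V) : List V → V → ℝ :=
  fun h w => if w = c (cur root h) then 1 else 0

theorem pureStrat_memoryless (root : V) (c : V → V) : Memoryless root (pureStrat root c) := by
  intro h h' hh' w
  simp only [pureStrat, hh']

theorem sum_pureStrat_mul {root : V} {c : V → V} {s : Finset V} {h : List V}
    (hs : c (cur root h) ∈ s) (g : V → ℝ) :
    ∑ w ∈ s, pureStrat root c h w * g w = g (c (cur root h)) := by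
  simp [pureStrat, ite_mul, hs]

theorem pureStrat_valid {children : V → Finset V} {root : V} {c : V → V}
    (hc : ∀ v, (children v).Nonempty → c v ∈ children v) :
    ValidStrat children root (pureStrat root c) :=
  ⟨fun _ _ => ite_nonneg zero_le_one le_rfl,
    fun _ hne => by simpa using sum_pureStrat_mul (hc _ hne) (fun _ => (1 : ℝ))⟩

end PureStrategies

section BestChild

variable {V : Type*} (children : V → Finset V)

/-- A maximizer of `f` among the children of `v`; junk value `v` at a leaf. -/
noncomputable def bestChild (f : V → ℝ) (v : V) : V :=
  if hc : (children v).Nonempty then (exists_mem_eq_sup' hc f).choose else v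

variable {children}

theorem bestChild_mem {f : V → ℝ} {v : V} (hc : (children v).Nonempty) :
    bestChild children f v ∈ children v := by
  rw [bestChild, dif_pos hc]
  exact (exists_mem_eq_sup' hc f).choose_spec.1

theorem sup'_eq_apply_bestChild {f : V → ℝ} {v : V} (hc : (children v).Nonempty) :
    (children v).sup' hc f = f (bestChild children f v) := by
  rw [bestChild, dif_pos hc]
  exact (exists_mem_eq_sup' hc f).choose_spec.2

end BestChild

section FollowerValue

variable {V : Type*} (children : V → Finset V) (owner : V → Bool) (u : V → ℝ)
  (t : V → V → ℝ)

/-- Backward-induction value, with `n` steps of lookahead, of the follower's problem when the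
leader moves from `v` to `w` with probability `t v w`. -/
noncomputable def followerValue : ℕ → V → ℝ
  | 0, v => u v
  | n + 1, v =>
      if hc : (children v).Nonempty then
        if owner v = true then ∑ w ∈ children v, t v w * followerValue n w
        else (children v).sup' hc (followerValue n)
      else u v

variable {children owner u t}

theorem followerValue_of_children_eq_empty {v : V} (hc : children v = ∅) (n : ℕ) :
    followerValue children owner u t n v = u v := by
  cases n <;> simp [followerValue, hc]

theorem followerValue_succ_of_nonempty {v : V} (hc : (children v).Nonempty) (n : ℕ) :
    followerValue children owner u t (n + 1) v =
      if owner v = true then ∑ w ∈ children v, t v w * followerValue children owner u t n w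
      else (children v).sup' hc (followerValue children owner u t n) := by
  simp [followerValue, hc]

end FollowerValue

theorem EU_le_followerValue {V : Type*} [DecidableEq V] {children : V → Finset V} {root : V}
    {owner : V → Bool} {u : V → ℝ} {τ σ : List V → V → ℝ}
    (hτ : ValidStrat children root τ) (hτm : Memoryless root τ)
    (hσ : ValidStrat children root σ) (n : ℕ) (h : List V) :
    EU children root u (combine owner root τ σ) n h ≤
      followerValue children owner u (fun v => τ [v]) n (cur root h) := by
  induction n generalizing h with
  | zero => rfl
  | succ n ih =>
    rcases (children (cur root h)).eq_empty_or_nonempty with hc | hc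
    · rw [EU_of_children_eq_empty hc, followerValue_of_children_eq_empty hc]
    have ih' : ∀ w, EU children root u (combine owner root τ σ) n (h ++ [w]) ≤
        followerValue children owner u (fun v => τ [v]) n w := fun w => by
      simpa only [cur_append] using ih (h ++ [w])
    rw [EU_succ_of_nonempty hc, followerValue_succ_of_nonempty hc]
    cases ho : owner (cur root h)
    · simp only [combine, ho, Bool.false_eq_true, if_false]
      calc _ ≤ ∑ w ∈ children (cur root h), σ h w * (children (cur root h)).sup' hc
                (followerValue children owner u (fun v => τ [v]) n) :=
            sum_le_sum fun w hw =>
              mul_le_mul_of_nonneg_left ((ih' w).trans (le_sup' _ hw)) (hσ.1 h w)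
        _ = _ := by rw [← sum_mul, hσ.2 h hc, one_mul]
    · simp only [combine, ho, if_true, hτm.apply_eq h]
      exact sum_le_sum fun w _ => mul_le_mul_of_nonneg_left (ih' w) (hτ.1 _ w)

section Acyclic

variable {V : Type*} [Fintype V] {children : V → Finset V}

variable (children) in
open Classical in
noncomputable def numDescendants (v : V) : ℕ :=
  #{x | Relation.TransGen (fun a b => b ∈ children a) v x}

theorem numDescendants_le_card (v : V) : numDescendants children v ≤ Fintype.card V :=
  card_le_univ _

theorem numDescendants_lt_of_mem
    (hacyc : ∀ v, ¬ Relation.TransGen (fun a b => b ∈ children a) v v)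
    {v w : V} (hw : w ∈ children v) : numDescendants children w < numDescendants children v := by
  classical
  refine card_lt_card ((ssubset_iff_of_subset fun x hx => ?_).2 ⟨w, ?_, ?_⟩)
  · simp only [mem_filter, mem_univ, true_and] at hx ⊢
    exact Relation.TransGen.head hw hx
  · simpa using Relation.TransGen.single hw
  · simpa using hacyc w

variable {owner : V → Bool} {u : V → ℝ} {t : V → V → ℝ}

theorem followerValue_eq_of_numDescendants_le
    (hacyc : ∀ v, ¬ Relation.TransGen (fun a b => b ∈ children a) v v) {m n : ℕ} {v : V}
    (hm : numDescendants children v ≤ m) (hn : numDescendants children v ≤ n) :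
    followerValue children owner u t m v = followerValue children owner u t n v := by
  induction n generalizing m v with
  | zero =>
    have hc : children v = ∅ := eq_empty_of_forall_notMem fun w hw => by
      have := numDescendants_lt_of_mem hacyc hw
      omega
    rw [followerValue_of_children_eq_empty hc, followerValue_of_children_eq_empty hc]
  | succ n ih =>
    rcases (children v).eq_empty_or_nonempty with hc | hc
    · rw [followerValue_of_children_eq_empty hc, followerValue_of_children_eq_empty hc]
    obtain ⟨w₀, hw₀⟩ := id hc
    obtain ⟨m, rfl⟩ : ∃ m', m = m' + 1 :=
      Nat.exists_eq_add_one_of_ne_zero (by have := numDescendants_lt_of_mem hacyc hw₀; omega)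
    have hchild : ∀ w ∈ children v,
        followerValue children owner u t m w = followerValue children owner u t n w :=
      fun w hw => by
        have := numDescendants_lt_of_mem hacyc hw
        exact ih (by omega) (by omega)
    rw [followerValue_succ_of_nonempty hc, followerValue_succ_of_nonempty hc]
    split_ifs
    · exact sum_congr rfl fun w hw => by rw [hchild w hw]
    · exact sup'_congr _ rfl hchild

end Acyclic

section BackwardInduction

variable {V : Type*} [Fintype V] [DecidableEq V] {children : V → Finset V} {root : V}
  {owner : V → Bool} {u : V → ℝ} {τ : List V → V → ℝ}

variable (children root owner u) in
/-- Fuel `Fintype.card V` bounds the number of descendants of every node, so the values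
maximized here are the exact backward-induction values. -/
noncomputable def inductionReply (t : V → V → ℝ) : List V → V → ℝ :=
  pureStrat root (bestChild children (followerValue children owner u t (Fintype.card V)))

theorem EU_inductionReply
    (hacyc : ∀ v, ¬ Relation.TransGen (fun a b => b ∈ children a) v v)
    (hτm : Memoryless root τ) (n : ℕ) (h : List V)
    (hn : numDescendants children (cur root h) ≤ n) :
    EU children root u
        (combine owner root τ (inductionReply children root owner u fun v => τ [v])) n h =
      followerValue children owner u (fun v => τ [v]) n (cur root h) := by
  induction n generalizing h with
  | zero => rfl
  | succ n ih =>
    rcases (children (cur root h)).eq_empty_or_nonempty with hc | hc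
    · rw [EU_of_children_eq_empty hc, followerValue_of_children_eq_empty hc]
    have hchild : ∀ w ∈ children (cur root h), numDescendants children w ≤ n := fun w hw => by
      have := numDescendants_lt_of_mem hacyc hw
      omega
    have ih' : ∀ w ∈ children (cur root h), EU children root u
        (combine owner root τ (inductionReply children root owner u fun v => τ [v]))
          n (h ++ [w]) = followerValue children owner u (fun v => τ [v]) n w := fun w hw => by
      simpa only [cur_append] using ih (h ++ [w]) (by rw [cur_append]; exact hchild w hw)
    rw [EU_succ_of_nonempty hc, followerValue_succ_of_nonempty hc]
    cases ho : owner (cur root h)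
    · simp only [combine, ho, Bool.false_eq_true, if_false]
      have hstable : ∀ w ∈ children (cur root h),
          followerValue children owner u (fun v => τ [v]) n w =
            followerValue children owner u (fun v => τ [v]) (Fintype.card V) w :=
        fun w hw => followerValue_eq_of_numDescendants_le hacyc (hchild w hw)
          (numDescendants_le_card w)
      have hbest := bestChild_mem (f := followerValue children owner u (fun v => τ [v])
        (Fintype.card V)) hc
      refine (sum_pureStrat_mul hbest _).trans ?_
      rw [ih' _ hbest, sup'_congr hc rfl hstable,
        sup'_eq_apply_bestChild hc, hstable _ hbest]
    · simp only [combine, ho, if_true, hτm.apply_eq h]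
      exact sum_congr rfl fun w hw => by rw [ih' w hw]

theorem bestResponse_of_forall_memoryless
    (hacyc : ∀ v, ¬ Relation.TransGen (fun a b => b ∈ children a) v v)
    {τ' : List V → V → ℝ} (hτ : ValidStrat children root τ) (hτm : Memoryless root τ)
    (hτ' : ValidStrat children root τ')
    (hbest : ∀ σ, ValidStrat children root σ → Memoryless root σ →
      payoff children root owner u τ σ ≤ payoff children root owner u τ τ') :
    BestResponse children root owner u τ τ' := by
  have hreply : payoff children root owner u τ
      (inductionReply children root owner u fun v => τ [v]) =
        followerValue children owner u (fun v => τ [v]) (Fintype.card V) root :=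
    EU_inductionReply hacyc hτm _ [root] (numDescendants_le_card root)
  refine ⟨hτ', fun σ hσ => ?_⟩
  calc payoff children root owner u τ σ
      ≤ followerValue children owner u (fun v => τ [v]) (Fintype.card V) root :=
        EU_le_followerValue hτ hτm hσ _ [root]
    _ = payoff children root owner u τ (inductionReply children root owner u fun v => τ [v]) :=
        hreply.symm
    _ ≤ payoff children root owner u τ τ' :=
        hbest _ (pureStrat_valid fun _ => bestChild_mem) (pureStrat_memoryless _ _)

end BackwardInduction

theorem stmt11_general {V : Type*} [Fintype V] [DecidableEq V]
    (children : V → Finset V) (root : V) (owner : V → Bool) (u1 u2 : V → ℝ)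
    (hacyc : ∀ v, ¬ Relation.TransGen (fun a b => b ∈ children a) v v)
    (σ1 σ2 τ1 τ2 : List V → V → ℝ)
    (hSSE : IsSSE children root owner u1 u2 σ1 σ2)
    (hτ1v : ValidStrat children root τ1) (hτ1m : Memoryless root τ1)
    (hτ2v : ValidStrat children root τ2)
    (hτBR : ∀ σ2', ValidStrat children root σ2' → Memoryless root σ2' →
      payoff children root owner u2 τ1 σ2' ≤ payoff children root owner u2 τ1 τ2) :
    payoff children root owner u1 τ1 τ2 ≤ payoff children root owner u1 σ1 σ2 :=
  hSSE.2.2 τ1 τ2 hτ1v (bestResponse_of_forall_memoryless hacyc hτ1v hτ1m hτ2v hτBR)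

/-- Proposition 1: the leader's payoff in any SSE with history-dependent strategies is at
least the leader's payoff in any SSE where both players are restricted to memoryless
strategies (with best responses taken within the memoryless class). -/
theorem stmt11 {V : Type*} [Fintype V] [DecidableEq V]
    (children : V → Finset V) (root : V) (owner : V → Bool) (u1 u2 : V → ℝ)
    (hacyc : ∀ v, ¬ Relation.TransGen (fun a b => b ∈ children a) v v)
    (σ1 σ2 τ1 τ2 : List V → V → ℝ)
    (hSSE : IsSSE children root owner u1 u2 σ1 σ2)
    (hτ1v : ValidStrat children root τ1) (hτ1m : Memoryless root τ1)
    (hτ2v : ValidStrat children root τ2) (hτ2m : Memoryless root τ2)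
    (hτBR : ∀ σ2', ValidStrat children root σ2' → Memoryless root σ2' →
      payoff children root owner u2 τ1 σ2' ≤ payoff children root owner u2 τ1 τ2)
    (hτmax : ∀ τ1' τ2', ValidStrat children root τ1' → Memoryless root τ1' →
      ValidStrat children root τ2' → Memoryless root τ2' →
      (∀ σ2', ValidStrat children root σ2' → Memoryless root σ2' →
        payoff children root owner u2 τ1' σ2' ≤ payoff children root owner u2 τ1' τ2') →
      payoff children root owner u1 τ1' τ2' ≤ payoff children root owner u1 τ1 τ2) :
    payoff children root owner u1 τ1 τ2 ≤ payoff children root owner u1 σ1 σ2 :=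
  stmt11_general children root owner u1 u2 hacyc σ1 σ2 τ1 τ2 hSSE hτ1v hτ1m hτ2v hτBR
end
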